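/- arXiv:2203.00063 — 3 statements merged into one kernel-verified Lean document; each statement's English description precedes it below -/
import Mathlib

section
/- There exists a unique bounded measurable function v^* : M \to [0,1] such that v^*(x) = 1 for all x \in M^s and, for all x \in M \setminus M^s, v^*(x) = \left( \int_{M^s} k(x,y) d\mu(y) + \int_{M \setminus M^s} v^*(y) k(x,y) d\mu(y) \right) / \left( \rho + \int_M k(x,y) d\mu(y) \right). -/
open MeasureTheory Filter Topology Function

section Aux

variable {M : Type*} [MeasurableSpace M]

open Classical in
/-- The affine operator whose fixed points are the solutions. -/
noncomputable def Tmap (μ : Measure M) (k : M → M → ℝ) (Ms : Set M) (ρ : ℝ)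
    (v : M → ℝ) : M → ℝ := fun x =>
  if x ∈ Ms then 1
  else ((∫ y in Ms, k x y ∂μ) + ∫ y in Msᶜ, v y * k x y ∂μ) / (ρ + ∫ y, k x y ∂μ)

variable {μ : Measure M} [IsProbabilityMeasure μ] {k : M → M → ℝ} {Ms : Set M} {ρ : ℝ}

lemma kx_meas (hk : Measurable (Function.uncurry k)) (x : M) :
    Measurable fun y => k x y := hk.of_uncurry_left

lemma kx_int (hk : Measurable (Function.uncurry k))
    (hk01 : ∀ x y, k x y ∈ Set.Icc (0:ℝ) 1) (x : M)
    (ν : Measure M) [IsFiniteMeasure ν] : Integrable (fun y => k x y) ν := by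
  refine Integrable.mono' (integrable_const 1) ((kx_meas hk x).aestronglyMeasurable) ?_
  refine Filter.Eventually.of_forall fun y => ?_
  rw [Real.norm_eq_abs, abs_of_nonneg (hk01 x y).1]
  exact (hk01 x y).2

lemma vk_int (hk : Measurable (Function.uncurry k))
    (hk01 : ∀ x y, k x y ∈ Set.Icc (0:ℝ) 1) {v : M → ℝ} (hv : Measurable v)
    (hv01 : ∀ y, v y ∈ Set.Icc (0:ℝ) 1) (x : M)
    (ν : Measure M) [IsFiniteMeasure ν] : Integrable (fun y => v y * k x y) ν := by
  refine Integrable.mono' (integrable_const 1)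
    ((hv.mul (kx_meas hk x)).aestronglyMeasurable) ?_
  refine Filter.Eventually.of_forall fun y => ?_
  rw [Real.norm_eq_abs, abs_of_nonneg (mul_nonneg (hv01 y).1 (hk01 x y).1)]
  calc v y * k x y ≤ 1 * 1 :=
        mul_le_mul (hv01 y).2 (hk01 x y).2 (hk01 x y).1 one_pos.le
    _ = 1 := one_mul 1

lemma I_nonneg (hk01 : ∀ x y, k x y ∈ Set.Icc (0:ℝ) 1) (x : M) :
    0 ≤ ∫ y, k x y ∂μ :=
  integral_nonneg fun y => (hk01 x y).1

lemma I_le_one (hk : Measurable (Function.uncurry k))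
    (hk01 : ∀ x y, k x y ∈ Set.Icc (0:ℝ) 1) (x : M) :
    (∫ y, k x y ∂μ) ≤ 1 := by
  calc (∫ y, k x y ∂μ) ≤ ∫ _, (1:ℝ) ∂μ :=
        integral_mono (kx_int hk hk01 x μ) (integrable_const 1) fun y => (hk01 x y).2
    _ = 1 := by simp

lemma denom_pos (hk01 : ∀ x y, k x y ∈ Set.Icc (0:ℝ) 1) (hρ : 0 < ρ) (x : M) :
    0 < ρ + ∫ y, k x y ∂μ :=
  lt_add_of_pos_of_le hρ (I_nonneg hk01 x)

lemma T_meas (hk : Measurable (Function.uncurry k)) (hMs : MeasurableSet Ms)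
    {v : M → ℝ} (hv : Measurable v) : Measurable (Tmap μ k Ms ρ v) := by
  have h1 : Measurable fun x => ∫ y in Ms, k x y ∂μ :=
    (hk.stronglyMeasurable.integral_prod_right' (ν := μ.restrict Ms)).measurable
  have h2 : Measurable fun x => ∫ y in Msᶜ, v y * k x y ∂μ := by
    have : Measurable (Function.uncurry fun x y => v y * k x y) :=
      (hv.comp measurable_snd).mul hk
    exact (this.stronglyMeasurable.integral_prod_right' (ν := μ.restrict Msᶜ)).measurable
  have h3 : Measurable fun x => ρ + ∫ y, k x y ∂μ :=
    measurable_const.add (hk.stronglyMeasurable.integral_prod_right' (ν := μ)).measurable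
  unfold Tmap
  exact Measurable.ite hMs measurable_const ((h1.add h2).div h3)

lemma T_mem (hk : Measurable (Function.uncurry k))
    (hk01 : ∀ x y, k x y ∈ Set.Icc (0:ℝ) 1) (hMs : MeasurableSet Ms) (hρ : 0 < ρ)
    {v : M → ℝ} (hv : Measurable v) (hv01 : ∀ y, v y ∈ Set.Icc (0:ℝ) 1) (x : M) :
    Tmap μ k Ms ρ v x ∈ Set.Icc (0:ℝ) 1 := by
  unfold Tmap
  by_cases hx : x ∈ Ms
  · simp [hx]
  · rw [if_neg hx]
    have hd := denom_pos (μ := μ) hk01 hρ x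
    have h1 : 0 ≤ ∫ y in Ms, k x y ∂μ := integral_nonneg fun y => (hk01 x y).1
    have h2 : 0 ≤ ∫ y in Msᶜ, v y * k x y ∂μ :=
      integral_nonneg fun y => mul_nonneg (hv01 y).1 (hk01 x y).1
    constructor
    · exact div_nonneg (add_nonneg h1 h2) hd.le
    · rw [div_le_one hd]
      have h3 : (∫ y in Msᶜ, v y * k x y ∂μ) ≤ ∫ y in Msᶜ, k x y ∂μ := by
        refine integral_mono (vk_int hk hk01 hv hv01 x _) (kx_int hk hk01 x _) fun y => ?_
        calc v y * k x y ≤ 1 * k x y :=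
              mul_le_mul_of_nonneg_right (hv01 y).2 (hk01 x y).1
          _ = k x y := one_mul _
      have h4 : (∫ y in Ms, k x y ∂μ) + ∫ y in Msᶜ, k x y ∂μ = ∫ y, k x y ∂μ :=
        integral_add_compl hMs (kx_int hk hk01 x μ)
      nlinarith [I_nonneg (μ := μ) hk01 x]

lemma T_contr (hk : Measurable (Function.uncurry k))
    (hk01 : ∀ x y, k x y ∈ Set.Icc (0:ℝ) 1) (hρ : 0 < ρ)
    {v w : M → ℝ} (hv : Measurable v) (hw : Measurable w)
    (hv01 : ∀ y, v y ∈ Set.Icc (0:ℝ) 1) (hw01 : ∀ y, w y ∈ Set.Icc (0:ℝ) 1)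
    {C : ℝ} (hC : 0 ≤ C) (hvw : ∀ y, |v y - w y| ≤ C) (x : M) :
    |Tmap μ k Ms ρ v x - Tmap μ k Ms ρ w x| ≤ C / (1 + ρ) := by
  unfold Tmap
  by_cases hx : x ∈ Ms
  · simp only [if_pos hx, sub_self, abs_zero]
    positivity
  · rw [if_neg hx, if_neg hx]
    set I : ℝ := ∫ y, k x y ∂μ with hI
    have hI0 : 0 ≤ I := I_nonneg hk01 x
    have hI1 : I ≤ 1 := I_le_one hk hk01 x
    have hd : 0 < ρ + I := denom_pos hk01 hρ x
    rw [div_sub_div_same, add_sub_add_left_eq_sub, ← integral_sub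
      (vk_int hk hk01 hv hv01 x _) (vk_int hk hk01 hw hw01 x _)]
    have hnum : |∫ y in Msᶜ, (v y * k x y - w y * k x y) ∂μ| ≤ C * I := by
      have hb : ‖∫ y in Msᶜ, (v y * k x y - w y * k x y) ∂μ‖ ≤
          ∫ y in Msᶜ, C * k x y ∂μ := by
        refine norm_integral_le_of_norm_le ((kx_int hk hk01 x _).const_mul C) ?_
        refine Filter.Eventually.of_forall fun y => ?_
        rw [← sub_mul, Real.norm_eq_abs, abs_mul, abs_of_nonneg (hk01 x y).1]
        exact mul_le_mul_of_nonneg_right (hvw y) (hk01 x y).1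
      rw [Real.norm_eq_abs] at hb
      refine hb.trans ?_
      rw [integral_const_mul]
      refine mul_le_mul_of_nonneg_left ?_ hC
      refine (setIntegral_le_integral (kx_int hk hk01 x μ) ?_)
      exact Filter.Eventually.of_forall fun y => (hk01 x y).1
    rw [abs_div, abs_of_pos hd]
    rw [div_le_div_iff₀ hd (by linarith)]
    have h2 : |∫ y in Msᶜ, (v y * k x y - w y * k x y) ∂μ| * (1 + ρ) ≤ C * I * (1 + ρ) :=
      mul_le_mul_of_nonneg_right hnum (by linarith)
    have h3 : C * I * (1 + ρ) ≤ C * (ρ + I) := by nlinarith [mul_nonneg hC hρ.le]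
    linarith

end Aux

theorem stmt_6 {M : Type*} [MeasurableSpace M]
    (μ : Measure M) [IsProbabilityMeasure μ]
    (k : M → M → ℝ) (hk : Measurable (Function.uncurry k))
    (hk01 : ∀ x y, k x y ∈ Set.Icc (0:ℝ) 1)
    (Ms : Set M) (hMs : MeasurableSet Ms) (hMspos : 0 < μ Ms)
    (ρ : ℝ) (hρ : 0 < ρ) :
    ∃! v : M → ℝ, Measurable v ∧ (∀ x, v x ∈ Set.Icc (0:ℝ) 1) ∧
      (∀ x ∈ Ms, v x = 1) ∧
      ∀ x ∉ Ms, v x =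
        ((∫ y in Ms, k x y ∂μ) + ∫ y in Msᶜ, v y * k x y ∂μ)
          / (ρ + ∫ y, k x y ∂μ) := by
  classical
  set q : ℝ := 1 / (1 + ρ) with hq
  have hq0 : 0 ≤ q := by positivity
  have hq1 : q < 1 := by
    rw [hq, div_lt_one (by linarith)]; linarith
  -- any solution is a fixed point of T
  have hfix : ∀ v : M → ℝ, (∀ x ∈ Ms, v x = 1) →
      (∀ x ∉ Ms, v x = ((∫ y in Ms, k x y ∂μ) + ∫ y in Msᶜ, v y * k x y ∂μ)
        / (ρ + ∫ y, k x y ∂μ)) → Tmap μ k Ms ρ v = v := by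
    intro v h1 h2
    funext x
    by_cases hx : x ∈ Ms
    · simp only [Tmap, if_pos hx]; exact (h1 x hx).symm
    · simp only [Tmap, if_neg hx]; exact (h2 x hx).symm
  -- the iteration
  set v0 : M → ℝ := Ms.indicator fun _ => 1 with hv0
  set vs : ℕ → M → ℝ := fun n => (Tmap μ k Ms ρ)^[n] v0 with hvs
  have hvs_succ : ∀ n, vs (n + 1) = Tmap μ k Ms ρ (vs n) := by
    intro n; simp only [hvs, Function.iterate_succ_apply']
  have hmeas : ∀ n, Measurable (vs n) := by
    intro n
    induction n with
    | zero =>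
      simpa [hvs, hv0] using (measurable_const.indicator hMs :
        Measurable (Ms.indicator fun _ => (1:ℝ)))
    | succ n ih => rw [hvs_succ]; exact T_meas hk hMs ih
  have h01 : ∀ n x, vs n x ∈ Set.Icc (0:ℝ) 1 := by
    intro n
    induction n with
    | zero =>
      intro x
      simp only [hvs, Function.iterate_zero, id_eq, hv0]
      by_cases hx : x ∈ Ms <;> simp [Set.indicator_apply, hx]
    | succ n ih =>
      intro x
      rw [hvs_succ]
      exact T_mem hk hk01 hMs hρ (hmeas n) ih x
  have habs1 : ∀ (f g : M → ℝ), (∀ x, f x ∈ Set.Icc (0:ℝ) 1) →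
      (∀ x, g x ∈ Set.Icc (0:ℝ) 1) → ∀ x, |f x - g x| ≤ 1 := by
    intro f g hf hg x
    have h1 := (hf x).1; have h2 := (hf x).2
    have h3 := (hg x).1; have h4 := (hg x).2
    rw [abs_sub_le_iff]
    constructor <;> linarith
  have hstep : ∀ n x, |vs (n + 1) x - vs n x| ≤ q ^ n := by
    intro n
    induction n with
    | zero => simpa using habs1 _ _ (h01 1) (h01 0)
    | succ n ih =>
      intro x
      have h := T_contr (μ := μ) (Ms := Ms) hk hk01 hρ (hmeas (n+1)) (hmeas n) (h01 (n+1)) (h01 n)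
        (pow_nonneg hq0 n) ih x
      rw [← hvs_succ n, ← hvs_succ (n+1)] at h
      exact h.trans (le_of_eq (by rw [pow_succ, hq]; ring))
  -- pointwise convergence
  have hcauchy : ∀ x, ∃ L, Filter.Tendsto (fun n => vs n x) Filter.atTop (nhds L) := by
    intro x
    refine cauchySeq_tendsto_of_complete ?_
    refine cauchySeq_of_le_geometric q 1 hq1 fun n => ?_
    rw [Real.dist_eq, abs_sub_comm, one_mul]
    exact hstep n x
  choose vstar hvstar using hcauchy
  have hvm : Measurable vstar := by
    refine measurable_of_tendsto_metrizable' Filter.atTop hmeas ?_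
    rw [tendsto_pi_nhds]
    exact hvstar
  have hv01 : ∀ x, vstar x ∈ Set.Icc (0:ℝ) 1 := fun x =>
    isClosed_Icc.mem_of_tendsto (hvstar x)
      (Filter.Eventually.of_forall fun n => h01 n x)
  have hvMs : ∀ x ∈ Ms, vstar x = 1 := by
    intro x hx
    have hconst : ∀ n, vs n x = 1 := by
      intro n
      induction n with
      | zero => simp [hvs, hv0, Set.indicator_of_mem hx]
      | succ n ih => rw [hvs_succ]; simp only [Tmap, if_pos hx]
    have : Filter.Tendsto (fun n => vs n x) Filter.atTop (nhds 1) := by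
      simp only [hconst]; exact tendsto_const_nhds
    exact tendsto_nhds_unique (hvstar x) this
  have hveq : ∀ x ∉ Ms, vstar x =
      ((∫ y in Ms, k x y ∂μ) + ∫ y in Msᶜ, vstar y * k x y ∂μ)
        / (ρ + ∫ y, k x y ∂μ) := by
    intro x hx
    have h1 : Filter.Tendsto (fun n => vs (n + 1) x) Filter.atTop (nhds (vstar x)) :=
      (hvstar x).comp (Filter.tendsto_add_atTop_nat 1)
    have hint : Filter.Tendsto (fun n => ∫ y in Msᶜ, vs n y * k x y ∂μ)
        Filter.atTop (nhds (∫ y in Msᶜ, vstar y * k x y ∂μ)) := by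
      refine tendsto_integral_of_dominated_convergence (fun y => k x y)
        (fun n => ((hmeas n).mul (kx_meas hk x)).aestronglyMeasurable)
        (kx_int hk hk01 x _) (fun n => ?_) ?_
      · refine Filter.Eventually.of_forall fun y => ?_
        rw [Real.norm_eq_abs, abs_of_nonneg (mul_nonneg (h01 n y).1 (hk01 x y).1)]
        calc vs n y * k x y ≤ 1 * k x y :=
              mul_le_mul_of_nonneg_right (h01 n y).2 (hk01 x y).1
          _ = k x y := one_mul _
      · exact Filter.Eventually.of_forall fun y => (hvstar y).mul_const _
    have h2 : Filter.Tendsto (fun n => vs (n + 1) x) Filter.atTop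
        (nhds (((∫ y in Ms, k x y ∂μ) + ∫ y in Msᶜ, vstar y * k x y ∂μ)
          / (ρ + ∫ y, k x y ∂μ))) := by
      have heq : ∀ n, vs (n + 1) x =
          ((∫ y in Ms, k x y ∂μ) + ∫ y in Msᶜ, vs n y * k x y ∂μ)
            / (ρ + ∫ y, k x y ∂μ) := by
        intro n; rw [hvs_succ]; simp only [Tmap, if_neg hx]
      simp only [heq]
      exact (tendsto_const_nhds.add hint).div_const _
    exact tendsto_nhds_unique h1 h2
  refine ⟨vstar, ⟨hvm, hv01, hvMs, hveq⟩, ?_⟩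
  rintro w ⟨hwm, hw01, hwMs, hweq⟩
  have hfw : Tmap μ k Ms ρ w = w := hfix w hwMs hweq
  have hfv : Tmap μ k Ms ρ vstar = vstar := hfix vstar hvMs hveq
  have hiter : ∀ n x, |w x - vstar x| ≤ q ^ n := by
    intro n
    induction n with
    | zero => simpa using habs1 _ _ hw01 hv01
    | succ n ih =>
      intro x
      have h := T_contr (μ := μ) (Ms := Ms) hk hk01 hρ hwm hvm hw01 hv01 (pow_nonneg hq0 n) ih x
      rw [hfw, hfv] at h
      calc |w x - vstar x| ≤ q ^ n / (1 + ρ) := h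
        _ = q ^ (n + 1) := by rw [pow_succ, hq]; ring
  funext x
  have h0 : |w x - vstar x| ≤ 0 :=
    ge_of_tendsto' (tendsto_pow_atTop_nhds_zero_of_lt_one hq0 hq1)
      fun n => hiter n x
  have := abs_nonneg (w x - vstar x)
  have : |w x - vstar x| = 0 := le_antisymm h0 this
  linarith [abs_eq_zero.mp this, sub_eq_zero.mp (abs_eq_zero.mp this)]
end

section
/- Let f : X \to Z be a map between metric spaces and \epsilon > 0. Say f is \epsilon-injective if d(x, x') > \epsilon implies f(x) \ne f(x'). If v_1, \dots, v_d : S^{d-1} \to [0,1] are functions of the form v_i(x) = f(\angle(e_i, x)) for a common profile f : [0,\pi] \to [0,1] satisfying f(\theta) > f(\theta') whenever \theta' > \theta + r', then the map x \mapsto (v_1(x), \dots, v_d(x)) is (r'\sqrt{d})-injective on S^{d-1} with the Euclidean metric, where the angle differences satisfy the bound |\theta_i - \theta_i'| > r' for some i whenever \|x - x'\| > r'\sqrt{d}. -/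
lemma cos_lip (a b : ℝ) : |Real.cos a - Real.cos b| ≤ |a - b| := by
  rw [Real.cos_sub_cos]
  have h1 : |Real.sin ((a + b) / 2)| ≤ 1 := Real.abs_sin_le_one _
  have h2 : |Real.sin ((a - b) / 2)| ≤ |(a - b) / 2| := Real.abs_sin_le_abs
  calc |(-2) * Real.sin ((a + b) / 2) * Real.sin ((a - b) / 2)|
      = 2 * |Real.sin ((a + b) / 2)| * |Real.sin ((a - b) / 2)| := by
        rw [abs_mul, abs_mul]; norm_num
    _ ≤ 2 * 1 * |(a - b) / 2| := by
        apply mul_le_mul _ h2 (abs_nonneg _) (by positivity)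
        nlinarith [abs_nonneg (Real.sin ((a + b) / 2))]
    _ = |a - b| := by rw [abs_div]; rw [abs_of_nonneg (by norm_num : (0:ℝ) ≤ 2)]; ring

lemma coord_abs_le (d : ℕ) (y : EuclideanSpace ℝ (Fin d)) (hy : ‖y‖ = 1) (i : Fin d) :
    |y i| ≤ 1 := by
  have h2 : Real.sqrt (∑ j, (y j) ^ 2) = 1 := by
    rw [← hy, EuclideanSpace.norm_eq]
    simp [Real.norm_eq_abs, sq_abs]
  have h3 : (∑ j, (y j) ^ 2) = 1 := by
    have := Real.sq_sqrt (Finset.sum_nonneg fun j (_ : j ∈ Finset.univ) => sq_nonneg (y j))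
    rw [h2] at this; nlinarith
  have h1 : (y i) ^ 2 ≤ ∑ j, (y j) ^ 2 :=
    Finset.single_le_sum (fun j _ => sq_nonneg (y j)) (Finset.mem_univ i)
  rw [h3] at h1
  rw [abs_le]; constructor <;> nlinarith

theorem stmt_17 (d : ℕ) (r' : ℝ) (hr' : 0 < r') (f : ℝ → ℝ)
    (hf01 : ∀ θ, f θ ∈ Set.Icc (0:ℝ) 1)
    (hgap : ∀ θ θ', θ ∈ Set.Icc 0 Real.pi → θ' ∈ Set.Icc 0 Real.pi →
      θ + r' < θ' → f θ' < f θ) :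
    ∀ x x' : EuclideanSpace ℝ (Fin d), ‖x‖ = 1 → ‖x'‖ = 1 →
      r' * Real.sqrt d < ‖x - x'‖ →
      ∃ i, f (Real.arccos (x i)) ≠ f (Real.arccos (x' i)) := by
  intro x x' hx hx' hdist
  by_contra hc
  push_neg at hc
  -- each coordinate difference is at most r'
  have key : ∀ i : Fin d, |x i - x' i| ≤ r' := by
    intro i
    set a := Real.arccos (x i) with ha
    set b := Real.arccos (x' i) with hb
    have hamem : a ∈ Set.Icc 0 Real.pi := ⟨Real.arccos_nonneg _, Real.arccos_le_pi _⟩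
    have hbmem : b ∈ Set.Icc 0 Real.pi := ⟨Real.arccos_nonneg _, Real.arccos_le_pi _⟩
    have hab : |a - b| ≤ r' := by
      by_contra habs
      push_neg at habs
      have hEq := hc i
      rcases lt_abs.mp habs with h | h
      · have := hgap b a hbmem hamem (by linarith)
        rw [← ha, ← hb] at hEq
        linarith
      · have := hgap a b hamem hbmem (by linarith)
        rw [← ha, ← hb] at hEq
        linarith
    have hxc : Real.cos a = x i :=
      Real.cos_arccos (neg_le_of_abs_le (coord_abs_le d x hx i)) (le_of_abs_le (coord_abs_le d x hx i))
    have hxc' : Real.cos b = x' i :=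
      Real.cos_arccos (neg_le_of_abs_le (coord_abs_le d x' hx' i)) (le_of_abs_le (coord_abs_le d x' hx' i))
    calc |x i - x' i| = |Real.cos a - Real.cos b| := by rw [hxc, hxc']
      _ ≤ |a - b| := cos_lip a b
      _ ≤ r' := hab
  -- hence the norm is at most r' * sqrt d
  have hnorm : ‖x - x'‖ ≤ r' * Real.sqrt d := by
    have hsum : (∑ i, ((x - x') i) ^ 2) ≤ d * r' ^ 2 := by
      calc (∑ i, ((x - x') i) ^ 2) ≤ ∑ _i : Fin d, r' ^ 2 := by
            apply Finset.sum_le_sum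
            intro i _
            have hsub : (x - x') i = x i - x' i := rfl
            rw [hsub]
            nlinarith [key i, abs_nonneg (x i - x' i), sq_abs (x i - x' i), key i]
        _ = d * r' ^ 2 := by simp [Finset.sum_const, mul_comm]
    rw [EuclideanSpace.norm_eq]
    have : ∑ i, ‖(x - x') i‖ ^ 2 = ∑ i, ((x - x') i) ^ 2 := by
      simp [Real.norm_eq_abs, sq_abs]
    rw [this]
    calc Real.sqrt (∑ i, ((x - x') i) ^ 2) ≤ Real.sqrt (d * r' ^ 2) := Real.sqrt_le_sqrt hsum
      _ = r' * Real.sqrt d := by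
          rw [Real.sqrt_mul (Nat.cast_nonneg d), Real.sqrt_sq hr'.le, mul_comm]
  linarith
end

section
/- Let \tau be an isometry of S^{d-1} preserving the uniform measure \mu that exchanges two kernel balls B and B' (the reflection across the perpendicular bisector of x and x' along a geodesic through x_0), and suppose for all y \in B, \angle(x_0, y) \le \angle(x_0, \tau(y)). If v is radially nonincreasing about x_0 (v(y) = g(\angle(x_0, y)) with g nonincreasing), then \int_{B'} k(x', y) v(y) d\mu(y) = \int_B k(x', \tau(y)) v(\tau(y)) d\mu(y) \le \int_B k(x, y) v(y) d\mu(y). Consequently, the operator T preserves the class of radially nonincreasing functions, and the grounded voltage v_0 on S^{d-1} is monotonically nonincreasing in geodesic distance from the source. -/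
open MeasureTheory

theorem stmt_19 (d : ℕ)
    (μ : Measure (EuclideanSpace ℝ (Fin d))) [IsFiniteMeasure μ]
    (x0 x x' : EuclideanSpace ℝ (Fin d)) (r : ℝ) (hr : 0 < r)
    (τ : EuclideanSpace ℝ (Fin d) ≃ₗᵢ[ℝ] EuclideanSpace ℝ (Fin d))
    (hτμ : MeasurePreserving τ μ μ)
    (B B' : Set (EuclideanSpace ℝ (Fin d)))
    (hB : B = {y | dist x y ≤ r}) (hB' : B' = {y | dist x' y ≤ r})
    (hτB : τ '' B = B')
    (hτdist : ∀ y, dist x' (τ y) = dist x y)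
    (hangle : ∀ y ∈ B, InnerProductGeometry.angle x0 y
      ≤ InnerProductGeometry.angle x0 (τ y))
    (k : EuclideanSpace ℝ (Fin d) → EuclideanSpace ℝ (Fin d) → ℝ)
    (hk : ∀ a b, k a b = if dist a b ≤ r then 1 else 0)
    (v : EuclideanSpace ℝ (Fin d) → ℝ) (hvm : Measurable v)
    (hv01 : ∀ y, v y ∈ Set.Icc (0:ℝ) 1)
    (g : ℝ → ℝ) (hg : Antitone g)
    (hv : ∀ y, v y = g (InnerProductGeometry.angle x0 y)) :
    (∫ y in B', k x' y * v y ∂μ) = (∫ y in B, k x' (τ y) * v (τ y) ∂μ) ∧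
    (∫ y in B, k x' (τ y) * v (τ y) ∂μ) ≤ ∫ y in B, k x y * v y ∂μ := by
  have hBmeas : MeasurableSet B := by
    rw [hB]; exact measurableSet_le (measurable_const.dist measurable_id) measurable_const
  have hemb : MeasurableEmbedding (τ : EuclideanSpace ℝ (Fin d) → EuclideanSpace ℝ (Fin d)) :=
    τ.toHomeomorph.toMeasurableEquiv.measurableEmbedding
  constructor
  · rw [← hτB]
    exact hτμ.setIntegral_image_emb hemb _ _
  · have hint1 : IntegrableOn (fun y => k x' (τ y) * v (τ y)) B μ := by
      apply Integrable.integrableOn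
      apply (integrable_const (1:ℝ)).mono'
      · apply Measurable.aestronglyMeasurable
        apply Measurable.mul _ (hvm.comp τ.toHomeomorph.measurable)
        have : (fun y => k x' (τ y)) = Set.indicator {y | dist x' (τ y) ≤ r} (fun _ => (1:ℝ)) := by
          ext y; simp [hk, Set.indicator_apply]
        rw [this]
        exact measurable_const.indicator
          (measurableSet_le (measurable_const.dist τ.toHomeomorph.measurable) measurable_const)
      · filter_upwards with y
        simp only [Real.norm_eq_abs, hk]
        rcases hv01 (τ y) with ⟨h0, h1⟩
        split_ifs <;> rw [abs_of_nonneg (by linarith)] <;> nlinarith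
    have hint2 : IntegrableOn (fun y => k x y * v y) B μ := by
      apply Integrable.integrableOn
      apply (integrable_const (1:ℝ)).mono'
      · apply Measurable.aestronglyMeasurable
        apply Measurable.mul _ hvm
        show Measurable fun y => k x y
        have : (fun y => k x y) = Set.indicator {y | dist x y ≤ r} (fun _ => (1:ℝ)) := by
          ext y; simp [hk, Set.indicator_apply]
        rw [this]
        exact measurable_const.indicator
          (measurableSet_le (measurable_const.dist measurable_id) measurable_const)
      · filter_upwards with y
        simp only [Real.norm_eq_abs, hk]
        rcases hv01 y with ⟨h0, h1⟩
        split_ifs <;> rw [abs_of_nonneg (by linarith)] <;> nlinarith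
    apply setIntegral_mono_on hint1 hint2 hBmeas
    intro y hy
    have hyB : dist x y ≤ r := by rw [hB] at hy; exact hy
    have hk1 : k x' (τ y) = 1 := by rw [hk, hτdist, if_pos hyB]
    have hk2 : k x y = 1 := by rw [hk, if_pos hyB]
    rw [hk1, hk2, one_mul, one_mul, hv y, hv (τ y)]
    exact hg (hangle y hy)
end
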